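/- For every integer d ≥ 2, Dom has a winning strategy in the (d:1) biased Disjoint Domination Game on every finite simple graph without isolated vertices, in both the Dom-start and the Sepy-start versions. -/

import Mathlib

namespace DDG

variable {V : Type*}

/-- The closed neighborhood `N[v]` of a vertex `v`. -/
def closedNbhd (G : SimpleGraph V) (v : V) : Set V := insert v (G.neighborSet v)

/-- `D` is a dominating set of `G`: every vertex has a member of `D`
in its closed neighborhood. -/
def Dominates (G : SimpleGraph V) (D : Set V) : Prop :=
  ∀ v : V, (closedNbhd G v ∩ D).Nonempty

/-- A position of the game: the sets of purple and blue vertices. -/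
structure Pos (V : Type*) where
  purple : Set V
  blue : Set V

namespace Pos

/-- The vertex class of a color (`true` = purple, `false` = blue). -/
def colorSet (p : Pos V) (c : Bool) : Set V := if c then p.purple else p.blue

/-- The position obtained by coloring vertex `v` with color `c`. -/
def play (p : Pos V) (v : V) (c : Bool) : Pos V :=
  if c then ⟨insert v p.purple, p.blue⟩ else ⟨p.purple, insert v p.blue⟩

end Pos

/-- A legal move of the Disjoint Domination Game: select an uncolored vertex `v`
and a color `c` such that some `u ∈ N[v]` is not yet dominated in color `c`. -/
def LegalMove (G : SimpleGraph V) (p : Pos V) (v : V) (c : Bool) : Prop :=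
  v ∉ p.purple ∪ p.blue ∧ ∃ u ∈ closedNbhd G v, closedNbhd G u ∩ p.colorSet c = ∅

/-- End condition ⟨s⟩: some closed neighborhood is monochromatic; Sepy wins. -/
def SepyEnd (G : SimpleGraph V) (p : Pos V) : Prop :=
  ∃ v : V, closedNbhd G v ⊆ p.purple ∨ closedNbhd G v ⊆ p.blue

/-- End condition ⟨d⟩: both color classes are dominating sets; Dom wins. -/
def DomEnd (G : SimpleGraph V) (p : Pos V) : Prop :=
  Dominates G p.purple ∧ Dominates G p.blue

/-- `DomWins G turn p` : Dom has a winning strategy in the Disjoint Domination Game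
from position `p`, where `turn = true` iff it is Dom's move. -/
inductive DomWins (G : SimpleGraph V) : Bool → Pos V → Prop
  | terminal (turn : Bool) (p : Pos V) :
      ¬ SepyEnd G p → DomEnd G p → DomWins G turn p
  | domStep (p : Pos V) (v : V) (c : Bool) :
      ¬ SepyEnd G p → ¬ DomEnd G p → LegalMove G p v c →
      DomWins G false (p.play v c) → DomWins G true p
  | sepyStep (p : Pos V) :
      ¬ SepyEnd G p → ¬ DomEnd G p →
      (∃ v c, LegalMove G p v c) →
      (∀ v c, LegalMove G p v c → DomWins G true (p.play v c)) →
      DomWins G false p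

/-- `SepyWins G turn p` : Sepy has a winning strategy in the Disjoint Domination Game
from position `p`, where `turn = true` iff it is Dom's move. -/
inductive SepyWins (G : SimpleGraph V) : Bool → Pos V → Prop
  | terminal (turn : Bool) (p : Pos V) : SepyEnd G p → SepyWins G turn p
  | sepyStep (p : Pos V) (v : V) (c : Bool) :
      ¬ SepyEnd G p → ¬ DomEnd G p → LegalMove G p v c →
      SepyWins G true (p.play v c) → SepyWins G false p
  | domStep (p : Pos V) :
      ¬ SepyEnd G p → ¬ DomEnd G p →
      (∃ v c, LegalMove G p v c) →
      (∀ v c, LegalMove G p v c → SepyWins G false (p.play v c)) →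
      SepyWins G true p

end DDG


namespace DDG
/-- `DomWinsBiased G d st p` : Dom has a winning strategy in the `(d:1)` biased
Disjoint Domination Game from position `p`. The state `st` is `some k` when it is
Dom's move with `k` individual selections remaining in his current turn, and `none`
when it is Sepy's turn.  In each of his turns Dom sequentially makes exactly `d`
legal moves (or all remaining legal moves if fewer are available), while in each of
his turns Sepy makes at most one legal move (he may pass). -/
inductive DomWinsBiased (G : SimpleGraph V) (d : ℕ) : Option ℕ → Pos V → Prop
  | terminal (st : Option ℕ) (p : Pos V) :
      ¬ SepyEnd G p → DomEnd G p → DomWinsBiased G d st p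
  | domStep (k : ℕ) (p : Pos V) (v : V) (c : Bool) :
      ¬ SepyEnd G p → ¬ DomEnd G p → LegalMove G p v c →
      DomWinsBiased G d (if k = 0 then none else some k) (p.play v c) →
      DomWinsBiased G d (some (k + 1)) p
  | domOut (k : ℕ) (p : Pos V) :
      ¬ SepyEnd G p → ¬ DomEnd G p → (¬ ∃ v c, LegalMove G p v c) →
      DomWinsBiased G d none p →
      DomWinsBiased G d (some (k + 1)) p
  | sepyStep (p : Pos V) :
      ¬ SepyEnd G p → ¬ DomEnd G p →
      (∀ v c, LegalMove G p v c → DomWinsBiased G d (some d) (p.play v c)) →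
      DomWinsBiased G d (some d) p →
      DomWinsBiased G d none p
end DDG

open DDG

/-!
Call a vertex `z` of color `c` a threat if no vertex of `N[z]` has the other color: Sepy wins
exactly when some threat has no uncolored vertex left around it. Since colors only accumulate,
a threat is harmless for good once `N[z]` contains an uncolored vertex on which `c` is illegal;
the other threats are open. Dom ends each of his turns with at most one open threat, and that one
with two uncolored vertices around it. Sepy's single move then completes nothing and adds at
most one open threat. With `d ≥ 2` moves Dom kills both by coloring an uncolored neighbor with
the opposite color, which never creates a new threat; he spends his remaining moves arbitrarily,
killing each threat he creates with the next move, and chooses his last move so that the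
invariant holds again. Every move colors a vertex, which makes induction on the number of
uncolored vertices possible.
-/

namespace DDG

variable {V : Type*} {G : SimpleGraph V} {p : Pos V} {u v x z : V} {c γ : Bool}

lemma mem_closedNbhd_self (v : V) : v ∈ closedNbhd G v := Set.mem_insert v _

lemma mem_closedNbhd_of_adj (h : G.Adj v u) : u ∈ closedNbhd G v := Set.mem_insert_of_mem v h

lemma mem_closedNbhd_comm : u ∈ closedNbhd G v ↔ v ∈ closedNbhd G u := by
  simp [closedNbhd, eq_comm, SimpleGraph.adj_comm]

namespace Pos

def uncolored (p : Pos V) : Set V := {v | v ∉ p.purple ∪ p.blue}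

lemma colorSet_play_self (p : Pos V) (v : V) (c : Bool) :
    (p.play v c).colorSet c = insert v (p.colorSet c) := by
  cases c <;> rfl

lemma colorSet_play_of_ne (p : Pos V) (v : V) {c c' : Bool} (h : c' ≠ c) :
    (p.play v c).colorSet c' = p.colorSet c' := by
  cases c <;> cases c' <;> first | rfl | exact absurd rfl h

lemma colorSet_play_not (p : Pos V) (v : V) (c : Bool) :
    (p.play v c).colorSet (!c) = p.colorSet (!c) :=
  colorSet_play_of_ne p v (by cases c <;> decide)

lemma colorSet_subset_play (p : Pos V) (v : V) (c c' : Bool) :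
    p.colorSet c' ⊆ (p.play v c).colorSet c' := by
  rcases eq_or_ne c' c with rfl | h
  · rw [colorSet_play_self]; exact Set.subset_insert v _
  · rw [colorSet_play_of_ne p v h]

lemma uncolored_play (p : Pos V) (v : V) (c : Bool) :
    (p.play v c).uncolored = p.uncolored \ {v} := by
  ext y; cases c <;> simp [uncolored, play] <;> tauto

lemma notMem_colorSet_of_mem_uncolored (hv : v ∈ p.uncolored) (c : Bool) :
    v ∉ p.colorSet c := by
  cases c
  · exact fun h => hv (Or.inr h)
  · exact fun h => hv (Or.inl h)

lemma mem_uncolored_or_mem_colorSet (p : Pos V) (v : V) (c : Bool) :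
    v ∈ p.uncolored ∨ v ∈ p.colorSet c ∨ v ∈ p.colorSet (!c) := by
  cases c <;> simp [uncolored, colorSet] <;> tauto

lemma disjoint_colorSet (hdis : Disjoint p.purple p.blue) (c : Bool) :
    Disjoint (p.colorSet c) (p.colorSet (!c)) := by
  cases c
  · exact hdis.symm
  · exact hdis

lemma disjoint_play (hdis : Disjoint p.purple p.blue) (hv : v ∈ p.uncolored) (c : Bool) :
    Disjoint (p.play v c).purple (p.play v c).blue := by
  have hp : v ∉ p.purple := fun h => hv (Or.inl h)
  have hb : v ∉ p.blue := fun h => hv (Or.inr h)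
  cases c
  · exact Set.disjoint_insert_right.2 ⟨hp, hdis⟩
  · exact Set.disjoint_insert_left.2 ⟨hb, hdis⟩

end Pos

open Pos

lemma LegalMove.of_play {c' : Bool} (h : LegalMove G (p.play v c) u c') : LegalMove G p u c' := by
  obtain ⟨hu, w, hw, hfree⟩ := h
  refine ⟨fun hp => hu ?_, w, hw, Set.subset_empty_iff.1 ?_⟩
  · cases c <;> rcases hp with hp | hp <;> simp [play, hp]
  · exact hfree ▸ Set.inter_subset_inter_right _ (colorSet_subset_play p v c c')

def Threat (G : SimpleGraph V) (p : Pos V) (c : Bool) (z : V) : Prop :=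
  z ∈ p.colorSet c ∧ closedNbhd G z ∩ p.colorSet (!c) = ∅

def Secure (G : SimpleGraph V) (p : Pos V) (c : Bool) (z : V) : Prop :=
  ∃ u ∈ closedNbhd G z, u ∈ p.uncolored ∧ ¬ LegalMove G p u c

def openThreats (G : SimpleGraph V) (p : Pos V) : Set (Bool × V) :=
  {a | Threat G p a.1 a.2 ∧ ¬ Secure G p a.1 a.2}

lemma Threat.of_closedNbhd_subset (hdis : Disjoint p.purple p.blue)
    (h : closedNbhd G z ⊆ p.colorSet c) : Threat G p c z :=
  ⟨h (mem_closedNbhd_self z), Set.subset_empty_iff.1 fun _ hy =>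
    Set.disjoint_left.1 (disjoint_colorSet hdis c) (h hy.1) hy.2⟩

lemma Threat.of_play (hv : v ∈ p.uncolored) (h : Threat G (p.play v γ) c z) :
    (c, z) = (γ, v) ∨ Threat G p c z := by
  rcases eq_or_ne c γ with rfl | hc
  · rcases (colorSet_play_self p v c ▸ h.1 : z ∈ insert v (p.colorSet c)) with rfl | hz
    · exact Or.inl rfl
    · exact Or.inr ⟨hz, colorSet_play_not p v c ▸ h.2⟩
  · obtain rfl : c = !γ := by cases c <;> cases γ <;> simp_all
    refine Or.inr ⟨colorSet_play_not p v γ ▸ h.1, Set.subset_empty_iff.1 ?_⟩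
    rw [← h.2, Bool.not_not, colorSet_play_self]
    exact Set.inter_subset_inter_right _ (Set.subset_insert v _)

lemma Threat.notMem_of_play_not (h : Threat G (p.play v (!c)) c z) : v ∉ closedNbhd G z := by
  intro hv
  have : v ∈ closedNbhd G z ∩ (p.play v (!c)).colorSet (!c) :=
    ⟨hv, colorSet_play_self p v (!c) ▸ Set.mem_insert v _⟩
  rwa [h.2] at this

lemma Secure.play (hleg : LegalMove G p v γ) (hs : Secure G p c z)
    (ht : Threat G (p.play v γ) c z) : Secure G (p.play v γ) c z := by
  obtain ⟨u, hu, huu, hill⟩ := hs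
  have huv : u ≠ v := by
    rintro rfl
    rcases eq_or_ne γ c with rfl | hc
    · exact hill hleg
    · obtain rfl : γ = !c := by cases c <;> cases γ <;> simp_all
      exact ht.notMem_of_play_not hu
  exact ⟨u, hu, uncolored_play p v γ ▸ ⟨huu, huv⟩, fun h => hill h.of_play⟩

lemma Secure.nonempty (h : Secure G p c z) : (closedNbhd G z ∩ p.uncolored).Nonempty :=
  let ⟨u, hu, huu, _⟩ := h; ⟨u, hu, huu⟩

lemma openThreats_play_subset (hleg : LegalMove G p v γ) :
    openThreats G (p.play v γ) ⊆ insert (γ, v) (openThreats G p) := by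
  rintro ⟨c, z⟩ ⟨ht, hns⟩
  rcases ht.of_play hleg.1 with h | ht'
  · exact Or.inl h
  · exact Or.inr ⟨ht', fun hs => hns (hs.play hleg ht)⟩

lemma legalMove_not_of_threat (ht : Threat G p γ x) (hu : u ∈ closedNbhd G x)
    (huu : u ∈ p.uncolored) : LegalMove G p u (!γ) :=
  ⟨huu, x, mem_closedNbhd_comm.1 hu, ht.2⟩

lemma openThreats_play_not_subset (ht : Threat G p γ x) (hu : u ∈ closedNbhd G x)
    (huu : u ∈ p.uncolored) :
    openThreats G (p.play u (!γ)) ⊆ openThreats G p \ {(γ, x)} := by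
  intro a ha
  rcases openThreats_play_subset (legalMove_not_of_threat ht hu huu) ha with rfl | ha'
  · refine absurd ha.1.2 (Set.nonempty_iff_ne_empty.1 ⟨x, mem_closedNbhd_comm.1 hu, ?_⟩)
    rw [Bool.not_not, colorSet_play_of_ne p u (by cases γ <;> decide)]
    exact ht.1
  · refine ⟨ha', ?_⟩
    rintro rfl
    exact ha.1.notMem_of_play_not hu

lemma Threat.closedNbhd_subset (ht : Threat G p c z)
    (hfull : closedNbhd G z ∩ p.uncolored = ∅) : closedNbhd G z ⊆ p.colorSet c := by
  intro y hy
  rcases mem_uncolored_or_mem_colorSet p y c with h | h | h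
  · exact absurd ⟨hy, h⟩ (Set.eq_empty_iff_forall_notMem.1 hfull y)
  · exact h
  · exact absurd ⟨hy, h⟩ (Set.eq_empty_iff_forall_notMem.1 ht.2 y)

lemma sepyEnd_iff (hdis : Disjoint p.purple p.blue) :
    SepyEnd G p ↔ ∃ a ∈ openThreats G p, closedNbhd G a.2 ∩ p.uncolored = ∅ := by
  constructor
  · rintro ⟨z, hz⟩
    obtain ⟨c, hsub⟩ : ∃ c, closedNbhd G z ⊆ p.colorSet c :=
      hz.elim (⟨true, ·⟩) (⟨false, ·⟩)
    have hfull : closedNbhd G z ∩ p.uncolored = ∅ := Set.eq_empty_of_forall_notMem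
      fun y hy => notMem_colorSet_of_mem_uncolored hy.2 c (hsub hy.1)
    exact ⟨(c, z), ⟨.of_closedNbhd_subset hdis hsub, fun hs => hs.nonempty.ne_empty hfull⟩,
      hfull⟩
  · rintro ⟨⟨c, z⟩, ha, hfull⟩
    have hsub := ha.1.closedNbhd_subset hfull
    cases c
    exacts [⟨z, Or.inr hsub⟩, ⟨z, Or.inl hsub⟩]

lemma exists_legalMove (hns : ¬ SepyEnd G p) (hde : ¬ DomEnd G p) :
    ∃ v c, LegalMove G p v c := by
  obtain ⟨c, z, hz⟩ : ∃ c z, closedNbhd G z ∩ p.colorSet c = ∅ := by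
    simp only [DomEnd, Dominates, not_and_or, not_forall, Set.not_nonempty_iff_eq_empty] at hde
    rcases hde with ⟨z, hz⟩ | ⟨z, hz⟩
    exacts [⟨true, z, hz⟩, ⟨false, z, hz⟩]
  by_cases hu : (closedNbhd G z ∩ p.uncolored).Nonempty
  · obtain ⟨u, hu, huu⟩ := hu
    exact ⟨u, c, huu, z, mem_closedNbhd_comm.1 hu, hz⟩
  · have ht : Threat G p (!c) z := by
      refine ⟨?_, by rwa [Bool.not_not]⟩
      rcases mem_uncolored_or_mem_colorSet p z c with h | h | h
      · exact absurd ⟨z, mem_closedNbhd_self z, h⟩ hu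
      · exact absurd ⟨mem_closedNbhd_self z, h⟩ (Set.eq_empty_iff_forall_notMem.1 hz z)
      · exact h
    have hsub := ht.closedNbhd_subset (Set.not_nonempty_iff_eq_empty.1 hu)
    cases c
    exacts [absurd ⟨z, Or.inl hsub⟩ hns, absurd ⟨z, Or.inr hsub⟩ hns]

/-- The vertex witnessing legality lies in `N[v]` and is not dominated in color `c`; if it is
`v` itself, a neighbor of `v` is not colored `c`. -/
lemma LegalMove.not_closedNbhd_subset (hiso : ∀ v : V, ∃ u : V, G.Adj v u)
    (hleg : LegalMove G p v c) : ¬ closedNbhd G v ⊆ (p.play v c).colorSet c := by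
  intro hsub
  obtain ⟨w, hw, hfree⟩ := hleg.2
  have hold : ∀ y ∈ closedNbhd G v, y ≠ v → y ∈ p.colorSet c := fun y hy hne =>
    have hy' : y ∈ insert v (p.colorSet c) := colorSet_play_self p v c ▸ hsub hy
    hy'.resolve_left hne
  rcases eq_or_ne w v with rfl | hwv
  · obtain ⟨y, hy⟩ := hiso w
    exact Set.eq_empty_iff_forall_notMem.1 hfree y
      ⟨mem_closedNbhd_of_adj hy, hold y (mem_closedNbhd_of_adj hy) hy.ne.symm⟩
  · exact Set.eq_empty_iff_forall_notMem.1 hfree w ⟨mem_closedNbhd_self w, hold w hw hwv⟩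

lemma not_sepyEnd_play (hiso : ∀ v : V, ∃ u : V, G.Adj v u) (hdis : Disjoint p.purple p.blue)
    (hleg : LegalMove G p v c) (hns : ¬ SepyEnd G p)
    (hsafe : ∀ z, (c, z) ∈ openThreats G p →
      ∃ t ∈ closedNbhd G z ∩ p.uncolored, t ≠ v) :
    ¬ SepyEnd G (p.play v c) := by
  rw [sepyEnd_iff (disjoint_play hdis hleg.1 c)]
  rintro ⟨⟨c', z⟩, ha, hfull⟩
  have hfull' : ∀ t ∈ closedNbhd G z ∩ p.uncolored, t = v := fun t ht => by
    by_contra hne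
    exact Set.eq_empty_iff_forall_notMem.1 hfull t
      ⟨ht.1, uncolored_play p v c ▸ ⟨ht.2, hne⟩⟩
  rcases openThreats_play_subset hleg ha with h | ha'
  · obtain ⟨rfl, rfl⟩ := Prod.mk.inj h
    exact hleg.not_closedNbhd_subset hiso (ha.1.closedNbhd_subset hfull)
  · rcases eq_or_ne c' c with rfl | hc
    · obtain ⟨t, ht, htv⟩ := hsafe z ha'
      exact htv (hfull' t ht)
    · obtain rfl : c = !c' := by cases c <;> cases c' <;> simp_all
      have hvz := ha.1.notMem_of_play_not
      refine hns ((sepyEnd_iff hdis).2 ⟨(c', z), ha', Set.eq_empty_of_forall_notMem ?_⟩)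
      exact fun t ht => hvz (hfull' t ht ▸ ht.1)

lemma nonempty_of_mem_openThreats (hdis : Disjoint p.purple p.blue) (hns : ¬ SepyEnd G p)
    {a : Bool × V} (ha : a ∈ openThreats G p) : (closedNbhd G a.2 ∩ p.uncolored).Nonempty :=
  Set.nonempty_iff_ne_empty.2 fun hfull => hns ((sepyEnd_iff hdis).2 ⟨a, ha, hfull⟩)

def DomReady (G : SimpleGraph V) (p : Pos V) : Prop :=
  Disjoint p.purple p.blue ∧ ¬ SepyEnd G p ∧ (openThreats G p).Subsingleton

def SepyReady (G : SimpleGraph V) (p : Pos V) : Prop :=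
  Disjoint p.purple p.blue ∧ (openThreats G p).Subsingleton ∧
    ∀ a ∈ openThreats G p, (closedNbhd G a.2 ∩ p.uncolored).Nontrivial

lemma SepyReady.not_sepyEnd (h : SepyReady G p) : ¬ SepyEnd G p := by
  rw [sepyEnd_iff h.1]
  rintro ⟨a, ha, hfull⟩
  exact (h.2.2 a ha).nonempty.ne_empty hfull

lemma SepyReady.domReady (h : SepyReady G p) : DomReady G p := ⟨h.1, h.not_sepyEnd, h.2.1⟩

lemma sepyReady_of_openThreats_eq_empty (hdis : Disjoint p.purple p.blue)
    (h : openThreats G p = ∅) : SepyReady G p :=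
  ⟨hdis, h ▸ Set.subsingleton_empty, by simp [h]⟩

lemma openThreats_play_subset_singleton (hempty : openThreats G p = ∅)
    (hleg : LegalMove G p v c) : openThreats G (p.play v c) ⊆ {(c, v)} := by
  simpa [hempty] using openThreats_play_subset hleg

lemma sepyReady_play (hdis : Disjoint p.purple p.blue) (hempty : openThreats G p = ∅)
    (hleg : LegalMove G p v c)
    (h : (c, v) ∈ openThreats G (p.play v c) →
      (closedNbhd G v ∩ (p.play v c).uncolored).Nontrivial) :
    SepyReady G (p.play v c) := by
  have hsub := openThreats_play_subset_singleton hempty hleg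
  refine ⟨disjoint_play hdis hleg.1 c, Set.subsingleton_singleton.anti hsub, fun a ha => ?_⟩
  obtain rfl := hsub ha
  exact h ha

/-- The naive move `(x, γ)` can leave an open threat at `x` whose
uncolored neighbors are all still legal for `γ`; a vertex `y` certifying this for one of them,
`u`, is not dominated in `γ`. If `y` is uncolored, coloring `u` with `!γ` leaves at most a
threat at `u` with `x` and `y` uncolored around it. Otherwise `y` is a secure threat of
color `!γ`, and coloring an uncolored neighbor of `y` with `γ` creates no threat at all. -/
lemma exists_legalMove_sepyReady (hiso : ∀ v : V, ∃ u : V, G.Adj v u)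
    (hdis : Disjoint p.purple p.blue) (hempty : openThreats G p = ∅) (hleg : LegalMove G p x γ) :
    ∃ v c, LegalMove G p v c ∧ SepyReady G (p.play v c) := by
  by_cases hx : (γ, x) ∈ openThreats G (p.play x γ)
  swap
  · exact ⟨x, γ, hleg, sepyReady_play hdis hempty hleg (absurd · hx)⟩
  obtain ⟨u, hux, huu⟩ : (closedNbhd G x ∩ (p.play x γ).uncolored).Nonempty :=
    Set.nonempty_iff_ne_empty.2 fun hfull =>
      hleg.not_closedNbhd_subset hiso (hx.1.closedNbhd_subset hfull)
  obtain ⟨-, y, hyu, hyfree⟩ : LegalMove G (p.play x γ) u γ := by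
    by_contra hill
    exact hx.2 ⟨u, hux, huu, hill⟩
  rw [uncolored_play] at huu
  have hxu : x ∈ closedNbhd G u := mem_closedNbhd_comm.1 hux
  have hxy : x ∉ closedNbhd G y := fun h => Set.eq_empty_iff_forall_notMem.1 hyfree x
    ⟨h, colorSet_play_self p x γ ▸ Set.mem_insert x _⟩
  have hyfree' : closedNbhd G y ∩ p.colorSet γ = ∅ := Set.subset_empty_iff.1
    (hyfree ▸ Set.inter_subset_inter_right _ (colorSet_subset_play p x γ γ))
  by_cases hy : y ∈ p.uncolored
  · have hleg' : LegalMove G p u (!γ) := ⟨huu.1, x, hxu, colorSet_play_not p x γ ▸ hx.1.2⟩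
    refine ⟨u, !γ, hleg', sepyReady_play hdis hempty hleg' fun _ => ?_⟩
    rw [uncolored_play]
    refine ⟨x, ⟨hxu, hleg.1, fun h => huu.2 (Set.mem_singleton_iff.2 h.symm)⟩,
      y, ⟨hyu, hy, ?_⟩, fun h => hxy (h ▸ mem_closedNbhd_self x)⟩
    rintro rfl
    exact hxy hxu
  · have hyc : y ∈ p.colorSet (!γ) :=
      ((mem_uncolored_or_mem_colorSet p y γ).resolve_left hy).resolve_left fun h =>
        Set.eq_empty_iff_forall_notMem.1 hyfree' y ⟨mem_closedNbhd_self y, h⟩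
    have hty : Threat G p (!γ) y := ⟨hyc, by rwa [Bool.not_not]⟩
    have hsec : Secure G p (!γ) y := by
      by_contra h
      exact Set.eq_empty_iff_forall_notMem.1 hempty (!γ, y) ⟨hty, h⟩
    obtain ⟨s, hsy, hsu⟩ := hsec.nonempty
    have hleg' : LegalMove G p s γ := ⟨hsu, y, mem_closedNbhd_comm.1 hsy, hyfree'⟩
    refine ⟨s, γ, hleg', sepyReady_play hdis hempty hleg' fun hs => absurd hs.1.2 ?_⟩
    exact Set.nonempty_iff_ne_empty.1
      ⟨y, mem_closedNbhd_comm.1 hsy, colorSet_play_not p s γ ▸ hyc⟩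

lemma DomWinsBiased.of_lastMove {d : ℕ} (hns : ¬ SepyEnd G p) (hde : ¬ DomEnd G p)
    (hleg : LegalMove G p v c) (h : DomWinsBiased G d none (p.play v c)) :
    DomWinsBiased G d (some 1) p :=
  .domStep 0 p v c hns hde hleg h

lemma DomWinsBiased.of_move {d k : ℕ} (hns : ¬ SepyEnd G p) (hde : ¬ DomEnd G p)
    (hleg : LegalMove G p v c) (h : DomWinsBiased G d (some (k + 1)) (p.play v c)) :
    DomWinsBiased G d (some (k + 2)) p :=
  .domStep (k + 1) p v c hns hde hleg h

section Strategy

variable (G) (d : ℕ)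

def DomTurnWins (p : Pos V) : Prop :=
  ∀ k : ℕ, DomReady G p → DomWinsBiased G d (some (k + 1)) p

def SepyTurnWins (p : Pos V) : Prop :=
  SepyReady G p → DomWinsBiased G d none p

variable {G d}

/-- Dom kills the open threat if there is one; otherwise he plays any legal move, except
that his last move is chosen by `exists_legalMove_sepyReady`. -/
lemma domTurnWins_of_forall_play (hiso : ∀ v : V, ∃ u : V, G.Adj v u)
    (hdom : ∀ v c, LegalMove G p v c → DomTurnWins G d (p.play v c))
    (hsepy : ∀ v c, LegalMove G p v c → SepyTurnWins G d (p.play v c)) :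
    DomTurnWins G d p := by
  rintro k ⟨hdis, hns, hsub⟩
  by_cases hde : DomEnd G p
  · exact .terminal _ _ hns hde
  rcases hsub.eq_empty_or_singleton with hempty | ⟨⟨γ, x⟩, hx⟩
  · obtain ⟨v, c, hleg⟩ := exists_legalMove hns hde
    cases k with
    | zero =>
      obtain ⟨w, c', hleg', hready⟩ := exists_legalMove_sepyReady hiso hdis hempty hleg
      exact .of_lastMove hns hde hleg' (hsepy w c' hleg' hready)
    | succ k =>
      refine .of_move hns hde hleg (hdom v c hleg k ⟨disjoint_play hdis hleg.1 c, ?_, ?_⟩)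
      · exact not_sepyEnd_play hiso hdis hleg hns fun z hz => by simp [hempty] at hz
      · exact Set.subsingleton_singleton.anti (openThreats_play_subset_singleton hempty hleg)
  · have hxo : (γ, x) ∈ openThreats G p := hx ▸ rfl
    obtain ⟨u, hux, huu⟩ := nonempty_of_mem_openThreats hdis hns hxo
    have hleg := legalMove_not_of_threat hxo.1 hux huu
    have hready : SepyReady G (p.play u (!γ)) :=
      sepyReady_of_openThreats_eq_empty (disjoint_play hdis huu (!γ))
        (Set.subset_empty_iff.1 (by simpa [hx] using openThreats_play_not_subset hxo.1 hux huu))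
    cases k with
    | zero => exact .of_lastMove hns hde hleg (hsepy _ _ hleg hready)
    | succ k => exact .of_move hns hde hleg (hdom _ _ hleg k hready.domReady)

/-- With two moves left, Dom first kills the threat `(γ₁, x₁)`. This cannot complete the other
threat unless it has the opposite color, and then it has a second uncolored neighbor. -/
lemma domWinsBiased_of_openThreats_subset_pair (hiso : ∀ v : V, ∃ u : V, G.Adj v u)
    (hp : DomTurnWins G d p) (hplay : ∀ v c, LegalMove G p v c → DomTurnWins G d (p.play v c))
    (hdis : Disjoint p.purple p.blue) (hns : ¬ SepyEnd G p) {x₁ x₂ : V} {γ₁ γ₂ : Bool}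
    (hopen : openThreats G p ⊆ {(γ₁, x₁), (γ₂, x₂)})
    (hmixed : (γ₂, x₂) ∈ openThreats G p → γ₂ ≠ γ₁ →
      (closedNbhd G x₂ ∩ p.uncolored).Nontrivial) (k : ℕ) :
    DomWinsBiased G d (some (k + 2)) p := by
  have hrest : openThreats G p \ {(γ₁, x₁)} ⊆ {(γ₂, x₂)} := fun a ha =>
    (hopen ha.1).resolve_left ha.2
  by_cases h₁ : (γ₁, x₁) ∈ openThreats G p
  swap
  · exact hp (k + 1) ⟨hdis, hns, Set.subsingleton_singleton.anti fun a ha =>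
      hrest ⟨ha, fun h => h₁ (Set.mem_singleton_iff.1 h ▸ ha)⟩⟩
  by_cases hde : DomEnd G p
  · exact .terminal _ _ hns hde
  obtain ⟨u, hux, huu⟩ : (closedNbhd G x₁ ∩ p.uncolored).Nonempty :=
    nonempty_of_mem_openThreats hdis hns h₁
  have hleg : LegalMove G p u (!γ₁) := legalMove_not_of_threat h₁.1 hux huu
  have hsub := (openThreats_play_not_subset h₁.1 hux huu).trans hrest
  refine .of_move hns hde hleg (hplay _ _ hleg k
    ⟨disjoint_play hdis huu _, ?_, Set.subsingleton_singleton.anti hsub⟩)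
  refine not_sepyEnd_play hiso hdis hleg hns fun z hz => ?_
  have hne : (!γ₁, z) ≠ (γ₁, x₁) := fun h => by cases γ₁ <;> simp at h
  obtain ⟨rfl, rfl⟩ := Prod.mk.inj (Set.mem_singleton_iff.1 (hrest ⟨hz, hne⟩))
  exact (hmixed hz (by cases γ₁ <;> decide)).exists_ne u

/-- The threat Dom left open keeps its two uncolored neighbors unless Sepy plays its color
next to it, and then the two open threats Dom faces have the same color. -/
lemma sepyTurnWins_of_forall_play (hd : 2 ≤ d) (hiso : ∀ v : V, ∃ u : V, G.Adj v u)
    (hp : DomTurnWins G d p)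
    (hplay : ∀ v c, LegalMove G p v c → DomTurnWins G d (p.play v c) ∧
      ∀ w c', LegalMove G (p.play v c) w c' → DomTurnWins G d ((p.play v c).play w c')) :
    SepyTurnWins G d p := by
  intro hready
  have hns := hready.not_sepyEnd
  obtain ⟨hdis, hsub, htwo⟩ := hready
  by_cases hde : DomEnd G p
  · exact .terminal _ _ hns hde
  obtain ⟨k, rfl⟩ : ∃ k, d = k + 2 := ⟨d - 2, by omega⟩
  refine .sepyStep p hns hde (fun v c hleg => ?_) (hp (k + 1) ⟨hdis, hns, hsub⟩)
  obtain ⟨γ, x, hx⟩ : ∃ γ x, openThreats G p ⊆ {(γ, x)} := by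
    rcases hsub.eq_empty_or_singleton with h | ⟨a, h⟩
    · exact ⟨c, v, h ▸ Set.empty_subset _⟩
    · exact ⟨a.1, a.2, h.subset⟩
  refine domWinsBiased_of_openThreats_subset_pair hiso (hplay v c hleg).1 (hplay v c hleg).2
    (disjoint_play hdis hleg.1 c) ?_ ((openThreats_play_subset hleg).trans
      (Set.insert_subset_insert hx)) (fun hxo hne => ?_) k
  · exact not_sepyEnd_play hiso hdis hleg hns fun z hz => (htwo _ hz).exists_ne v
  · have hxp : (γ, x) ∈ openThreats G p :=
      (openThreats_play_subset hleg hxo).resolve_left fun h => hne (Prod.mk.inj h).1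
    obtain rfl : c = !γ := by cases c <;> cases γ <;> simp_all
    have hvx := hxo.1.notMem_of_play_not
    rw [uncolored_play, ← Set.inter_sdiff_assoc,
      Set.sdiff_singleton_eq_self fun h => hvx h.1]
    exact htwo _ hxp

end Strategy

theorem domTurnWins_and_sepyTurnWins [Finite V] {d : ℕ} (hd : 2 ≤ d)
    (hiso : ∀ v : V, ∃ u : V, G.Adj v u) (p : Pos V) :
    DomTurnWins G d p ∧ SepyTurnWins G d p := by
  induction hn : p.uncolored.ncard using Nat.strong_induction_on generalizing p with
  | _ n ih =>
  have hlt : ∀ {q : Pos V} {v : V} {c : Bool}, v ∈ q.uncolored →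
      (q.play v c).uncolored.ncard < q.uncolored.ncard := fun hv => by
    rw [uncolored_play]
    exact Set.ncard_sdiff_singleton_lt_of_mem hv
  have hplay : ∀ v c, LegalMove G p v c →
      DomTurnWins G d (p.play v c) ∧ SepyTurnWins G d (p.play v c) := fun v c hleg =>
    ih _ (hn ▸ hlt hleg.1) _ rfl
  have hdom := domTurnWins_of_forall_play hiso (fun v c h => (hplay v c h).1)
    (fun v c h => (hplay v c h).2)
  refine ⟨hdom, sepyTurnWins_of_forall_play hd hiso hdom fun v c hleg =>
    ⟨(hplay v c hleg).1, fun w c' hleg' => (ih _ ?_ _ rfl).1⟩⟩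
  exact hn ▸ (hlt hleg'.1).trans (hlt hleg.1)

lemma sepyReady_empty : SepyReady G (⟨∅, ∅⟩ : Pos V) :=
  sepyReady_of_openThreats_eq_empty (Set.disjoint_empty _)
    (Set.eq_empty_of_forall_notMem fun ⟨c, _⟩ ha => by cases c <;> exact ha.1.1)

end DDG

/-- for every `d ≥ 2`, Dom has a winning strategy in the `(d:1)`
biased Disjoint Domination Game on every finite isolate-free graph, in both the
Dom-start and the Sepy-start versions. -/
theorem statement11 {V : Type*} [Fintype V] (d : ℕ) (hd : 2 ≤ d)
    (G : SimpleGraph V) (hiso : ∀ v : V, ∃ u : V, G.Adj v u) :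
    DomWinsBiased G d (some d) ⟨∅, ∅⟩ ∧ DomWinsBiased G d none ⟨∅, ∅⟩ := by
  obtain ⟨hdom, hsepy⟩ := domTurnWins_and_sepyTurnWins hd hiso (⟨∅, ∅⟩ : Pos V)
  obtain ⟨k, rfl⟩ : ∃ k, d = k + 1 := ⟨d - 1, by omega⟩
  exact ⟨hdom k sepyReady_empty.domReady, hsepy sepyReady_empty⟩
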